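/- arXiv:1401.4420 — 6 statements merged into one kernel-verified Lean document; each statement's English description precedes it below -/
import Mathlib

section
/- For any hypergraph H = (V, E) in which every vertex belongs to at most n hyperedges, there is a monotone hypergraph program of degree at most max(2, n) with at most 2|E| hyperedges that computes the hypergraph function f_H. -/
open Classical

/-- Labels of vertices in a hypergraph program. -/
inductive HGPLabel (α : Type) : Type
  | zero : HGPLabel α
  | one : HGPLabel α
  | pos (p : α) : HGPLabel α
  | neg (p : α) : HGPLabel α

def HGPLabel.eval {α : Type} (σ : α → Bool) : HGPLabel α → Bool
  | .zero => false
  | .one => true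
  | .pos p => σ p
  | .neg p => !σ p

/-- A hypergraph program with vertex type `W` and propositional variables `α`. -/
structure HGP (W α : Type) where
  edges : Finset (Finset W)
  label : W → HGPLabel α

/-- A monotone HGP has no negated variables among its labels. -/
def HGP.IsMonotone {W α : Type} (P : HGP W α) : Prop :=
  ∀ (w : W) (p : α), P.label w ≠ HGPLabel.neg p

/-- `P` computes the Boolean function `f`: for every input `σ`, `f σ` holds iff
some independent (pairwise disjoint) set of hyperedges covers all vertices whose
label evaluates to `0` under `σ`. -/
def HGP.Computes {W α : Type} (P : HGP W α) (f : (α → Bool) → Prop) : Prop :=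
  ∀ σ : α → Bool,
    f σ ↔ ∃ X ⊆ P.edges, (X : Set (Finset W)).Pairwise Disjoint ∧
      ∀ w : W, (P.label w).eval σ = false → ∃ e ∈ X, w ∈ e

/-- The hypergraph function `f_H` of a hypergraph `H = (V, E)`, a function of the
variables `p_v` (`Sum.inl v`) and `p_e` (`Sum.inr e`). -/
def hyperFun {V : Type} (E : Finset (Finset V)) (σ : V ⊕ Finset V → Bool) : Prop :=
  ∃ X ⊆ E, (X : Set (Finset V)).Pairwise Disjoint ∧
    (∀ e ∈ X, σ (Sum.inr e) = true) ∧
    (∀ v : V, (¬ ∃ e ∈ X, v ∈ e) → σ (Sum.inl v) = true)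

section Construction

variable {V : Type}

/-- The main program edge for a hyperedge `e`: the image of `e` together with the
gadget vertex `(e, false)`. -/
noncomputable def Be (e : Finset V) : Finset (V ⊕ (Finset V × Bool)) :=
  e.image Sum.inl ∪ {Sum.inr (e, false)}

/-- The auxiliary program edge for a hyperedge `e`: the two gadget vertices. -/
noncomputable def Ce (e : Finset V) : Finset (V ⊕ (Finset V × Bool)) :=
  {Sum.inr (e, false), Sum.inr (e, true)}

lemma inl_mem_Be {v : V} {e : Finset V} : Sum.inl v ∈ Be e ↔ v ∈ e := by
  simp [Be]

lemma inr_mem_Be {p : Finset V × Bool} {e : Finset V} :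
    Sum.inr p ∈ Be e ↔ p = (e, false) := by
  simp [Be]

lemma inl_not_mem_Ce {v : V} {e : Finset V} : Sum.inl v ∉ Ce e := by
  simp [Ce]

lemma inr_mem_Ce {p : Finset V × Bool} {e : Finset V} :
    Sum.inr p ∈ Ce e ↔ p = (e, false) ∨ p = (e, true) := by
  simp [Ce]

lemma Be_ne_Ce {e e' : Finset V} : Be e ≠ Ce e' := by
  intro h
  have h1 : (Sum.inr (e', true) : V ⊕ (Finset V × Bool)) ∈ Be e := by
    rw [h]; exact inr_mem_Ce.2 (Or.inr rfl)
  rw [inr_mem_Be] at h1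
  exact Bool.noConfusion (congrArg Prod.snd h1)

lemma Be_fst {e e' : Finset V} (h : Be e = Be e') : e = e' := by
  have h1 : (Sum.inr (e, false) : V ⊕ (Finset V × Bool)) ∈ Be e' := by
    rw [← h]; exact inr_mem_Be.2 rfl
  rw [inr_mem_Be, Prod.mk.injEq] at h1
  exact h1.1

lemma Ce_fst {e e' : Finset V} (h : Ce e = Ce e') : e = e' := by
  have h1 : (Sum.inr (e, false) : V ⊕ (Finset V × Bool)) ∈ Ce e' := by
    rw [← h]; exact inr_mem_Ce.2 (Or.inl rfl)
  rw [inr_mem_Ce] at h1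
  rcases h1 with h1 | h1 <;> rw [Prod.mk.injEq] at h1
  · exact h1.1
  · exact absurd h1.2 Bool.false_ne_true

end Construction

/-- For any hypergraph of degree at most `n` there is a monotone hypergraph
program of degree at most `max 2 n` and size `≤ 2|E|` computing `f_H`. -/
theorem stmt_1 {V : Type} (n : ℕ) (E : Finset (Finset V))
    (hdeg : ∀ v : V, (E.filter (fun e => v ∈ e)).card ≤ n) :
    ∃ (W : Type) (P : HGP W (V ⊕ Finset V)),
      P.IsMonotone ∧
      (∀ w : W, (P.edges.filter (fun e => w ∈ e)).card ≤ max 2 n) ∧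
      P.edges.card ≤ 2 * E.card ∧
      P.Computes (hyperFun E) := by
  classical
  refine ⟨V ⊕ (Finset V × Bool),
    ⟨E.image Be ∪ E.image Ce,
     fun w => match w with
       | .inl v => .pos (.inl v)
       | .inr (e, _) => if e ∈ E then .pos (.inr e) else .one⟩,
    ?_, ?_, ?_, ?_⟩
  · -- monotone
    rintro (v | ⟨e, b⟩) p
    · simp
    · by_cases h : e ∈ E <;> simp [h]
  · -- degree
    rintro (v | ⟨a, b⟩)
    · refine le_trans (le_trans (Finset.card_le_card ?_)
        (Finset.card_image_le (s := E.filter (fun e => v ∈ e)) (f := Be)))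
        (le_trans (hdeg v) (le_max_right 2 n))
      intro f hf
      simp only [Finset.mem_filter, Finset.mem_union, Finset.mem_image] at hf ⊢
      obtain ⟨hmem, hv⟩ := hf
      rcases hmem with ⟨e, he, rfl⟩ | ⟨e, he, rfl⟩
      · exact ⟨e, ⟨he, inl_mem_Be.1 hv⟩, rfl⟩
      · exact absurd hv inl_not_mem_Ce
    · refine le_trans (Finset.card_le_card (t := {Be a, Ce a}) ?_)
        (le_trans (Finset.card_insert_le _ _) (by simp))
      intro f hf
      simp only [Finset.mem_filter, Finset.mem_union, Finset.mem_image] at hf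
      obtain ⟨hmem, hv⟩ := hf
      rcases hmem with ⟨e, he, rfl⟩ | ⟨e, he, rfl⟩
      · rw [inr_mem_Be, Prod.mk.injEq] at hv
        simp [hv.1]
      · rw [inr_mem_Ce] at hv
        have : a = e := by
          rcases hv with h | h <;> rw [Prod.mk.injEq] at h <;> exact h.1
        simp [this]
  · -- size
    calc (E.image Be ∪ E.image Ce).card ≤ (E.image Be).card + (E.image Ce).card :=
          Finset.card_union_le _ _
      _ ≤ E.card + E.card := Nat.add_le_add Finset.card_image_le Finset.card_image_le
      _ = 2 * E.card := by ring
  · -- computes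
    intro σ
    constructor
    · rintro ⟨X, hXE, hXdisj, hXtrue, hXcov⟩
      refine ⟨X.image Be ∪ (E \ X).image Ce, ?_, ?_, ?_⟩
      · apply Finset.union_subset
        · exact (Finset.image_subset_image hXE).trans Finset.subset_union_left
        · exact (Finset.image_subset_image Finset.sdiff_subset).trans Finset.subset_union_right
      · intro a ha b hb hne
        simp only [Finset.coe_union, Set.mem_union, Finset.coe_image, Set.mem_image,
          Finset.mem_coe, Finset.mem_sdiff] at ha hb
        rw [Finset.disjoint_left]
        rintro (w | p) hwa hwb
        · rcases ha with ⟨e, he, rfl⟩ | ⟨e, he, rfl⟩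
          · rcases hb with ⟨e', he', rfl⟩ | ⟨e', he', rfl⟩
            · have hee' : e ≠ e' := fun h => hne (congrArg Be h)
              exact Finset.disjoint_left.1 (hXdisj he he' hee')
                (inl_mem_Be.1 hwa) (inl_mem_Be.1 hwb)
            · exact inl_not_mem_Ce hwb
          · exact inl_not_mem_Ce hwa
        · rcases ha with ⟨e, he, rfl⟩ | ⟨e, he, rfl⟩ <;>
            rcases hb with ⟨e', he', rfl⟩ | ⟨e', he', rfl⟩
          · rw [inr_mem_Be] at hwa hwb
            have h1 : p.1 = e := congrArg Prod.fst hwa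
            have h2 : p.1 = e' := congrArg Prod.fst hwb
            exact hne (congrArg Be (h1.symm.trans h2))
          · rw [inr_mem_Be] at hwa
            rw [inr_mem_Ce] at hwb
            have h1 : p.1 = e := congrArg Prod.fst hwa
            have h2 : p.1 = e' := by
              rcases hwb with h | h <;> exact congrArg Prod.fst h
            exact he'.2 ((h1.symm.trans h2) ▸ he)
          · rw [inr_mem_Be] at hwb
            rw [inr_mem_Ce] at hwa
            have h1 : p.1 = e' := congrArg Prod.fst hwb
            have h2 : p.1 = e := by
              rcases hwa with h | h <;> exact congrArg Prod.fst h
            exact he.2 ((h1.symm.trans h2) ▸ he')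
          · rw [inr_mem_Ce] at hwa hwb
            have h1 : p.1 = e := by
              rcases hwa with h | h <;> exact congrArg Prod.fst h
            have h2 : p.1 = e' := by
              rcases hwb with h | h <;> exact congrArg Prod.fst h
            exact hne (congrArg Ce (h1.symm.trans h2))
      · rintro (v | ⟨e, b⟩) hfalse
        · have hf : σ (Sum.inl v) = false := hfalse
          have hcov : ∃ e ∈ X, v ∈ e := by
            by_contra h
            rw [hXcov v h] at hf
            exact Bool.noConfusion hf
          obtain ⟨e, he, hve⟩ := hcov
          exact ⟨Be e, Finset.mem_union_left _ (Finset.mem_image_of_mem _ he),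
            inl_mem_Be.2 hve⟩
        · by_cases hE : e ∈ E
          · have hf : σ (Sum.inr e) = false := by simpa [hE, HGPLabel.eval] using hfalse
            have heX : e ∉ X := fun h => Bool.noConfusion ((hXtrue e h).symm.trans hf)
            refine ⟨Ce e, Finset.mem_union_right _
              (Finset.mem_image_of_mem _ (Finset.mem_sdiff.2 ⟨hE, heX⟩)), ?_⟩
            rcases b with _ | _
            · exact inr_mem_Ce.2 (Or.inl rfl)
            · exact inr_mem_Ce.2 (Or.inr rfl)
          · simp [hE, HGPLabel.eval] at hfalse
    · rintro ⟨Y, hYE, hYdisj, hYcov⟩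
      refine ⟨E.filter (fun e => Be e ∈ Y), Finset.filter_subset _ _, ?_, ?_, ?_⟩
      · intro e he e' he' hne
        simp only [Finset.coe_filter, Set.mem_setOf_eq] at he he'
        have hBne : Be e ≠ Be e' := fun h => hne (Be_fst h)
        have hdisjB := hYdisj (Finset.mem_coe.2 he.2) (Finset.mem_coe.2 he'.2) hBne
        rw [Finset.disjoint_left]
        intro v hv hv'
        exact Finset.disjoint_left.1 hdisjB (inl_mem_Be.2 hv) (inl_mem_Be.2 hv')
      · intro e he
        rw [Finset.mem_filter] at he
        by_contra hfalse
        rw [Bool.not_eq_true] at hfalse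
        -- the vertex (e, true) has a false label, so it must be covered
        obtain ⟨f, hfY, hmemf⟩ := hYcov (Sum.inr (e, true))
          (by simp only []; rw [if_pos he.1]; exact hfalse)
        have hfE := hYE hfY
        rw [Finset.mem_union] at hfE
        rcases hfE with hfE | hfE <;> rw [Finset.mem_image] at hfE <;>
          obtain ⟨e', he', rfl⟩ := hfE
        · rw [inr_mem_Be] at hmemf
          exact Bool.noConfusion (congrArg Prod.snd hmemf)
        · have hee' : e = e' := by
            rw [inr_mem_Ce] at hmemf
            rcases hmemf with h | h
            · exact absurd (congrArg Prod.snd h) (by simp)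
            · exact congrArg Prod.fst h
          subst hee'
          have := hYdisj (Finset.mem_coe.2 he.2) (Finset.mem_coe.2 hfY) Be_ne_Ce
          exact Finset.disjoint_left.1 this (inr_mem_Be.2 rfl) (inr_mem_Ce.2 (Or.inl rfl))
      · intro v hv
        by_contra hfalse
        rw [Bool.not_eq_true] at hfalse
        obtain ⟨f, hfY, hmemf⟩ := hYcov (Sum.inl v) hfalse
        have hfE := hYE hfY
        rw [Finset.mem_union] at hfE
        rcases hfE with hfE | hfE <;> rw [Finset.mem_image] at hfE <;>
          obtain ⟨e', he', rfl⟩ := hfE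
        · exact hv ⟨e', Finset.mem_filter.2 ⟨he', hfY⟩, inl_mem_Be.1 hmemf⟩
        · exact inl_not_mem_Ce hmemf
end

section
/- Let H be a hypergraph of degree 2 with hyperedges e_1,...,e_k, α an assignment of 0/1 values to its vertices, and Φ_α the 2-CNF over variables p_{e_1},...,p_{e_k} consisting of clauses (¬p_{e_i} ∨ ¬p_{e_j}) for every pair of intersecting hyperedges e_i, e_j, and clauses (p_{e_i} ∨ p_{e_j}) whenever some vertex v with α(v)=0 lies in e_i ∩ e_j. Then a set X of hyperedges is an independent set covering all zero-labelled vertices if and only if X = {e_i : β(p_{e_i}) = 1} for some assignment β satisfying Φ_α. -/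
open Classical

/-- For a degree-2 hypergraph with hyperedges `E 0, ..., E (k-1)` and a 0/1
assignment `α` to its vertices: a set `X` of hyperedges is independent and
covers all zero-labelled vertices iff `X = {e_i : β p_{e_i} = 1}` for some
assignment `β` satisfying the 2-CNF `Φ_α`, which consists of the clauses
`¬p_{e_i} ∨ ¬p_{e_j}` for intersecting pairs `e_i, e_j` and `p_{e_i} ∨ p_{e_j}`
whenever some vertex `v` with `α v = 0` lies in `e_i ∩ e_j`. -/
theorem stmt_3 {V : Type} [DecidableEq V] {k : ℕ} (E : Fin k → Finset V)
    (hdeg : ∀ v : V, (Finset.univ.filter (fun i => v ∈ E i)).card = 2)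
    (α : V → Bool) (X : Finset (Fin k)) :
    ((∀ i ∈ X, ∀ j ∈ X, i ≠ j → Disjoint (E i) (E j)) ∧
      (∀ v : V, α v = false → ∃ i ∈ X, v ∈ E i))
    ↔ ∃ β : Fin k → Bool,
        (∀ i j : Fin k, i ≠ j → (E i ∩ E j).Nonempty →
          (β i = false ∨ β j = false)) ∧
        (∀ (i j : Fin k) (v : V), i ≠ j → v ∈ E i → v ∈ E j → α v = false →
          (β i = true ∨ β j = true)) ∧
        X = Finset.univ.filter (fun i => β i = true) := by
  constructor
  · rintro ⟨hind, hcov⟩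
    refine ⟨fun i => decide (i ∈ X), ?_, ?_, ?_⟩
    · intro i j hij hne
      obtain ⟨v, hv⟩ := hne
      rw [Finset.mem_inter] at hv
      by_contra h
      simp only [not_or, decide_eq_false_iff_not, not_not] at h
      exact absurd ((hind i h.1 j h.2 hij).le_bot (Finset.mem_inter.2 hv)) (by simp)
    · intro i j v hij hvi hvj hv0
      obtain ⟨l, hlX, hvl⟩ := hcov v hv0
      obtain ⟨a, b, hab, hset⟩ := Finset.card_eq_two.1 (hdeg v)
      have hmem : ∀ m : Fin k, v ∈ E m → m = a ∨ m = b := by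
        intro m hm
        have : m ∈ Finset.univ.filter (fun i => v ∈ E i) := by simp [hm]
        rw [hset] at this; simpa using this
      have hl := hmem l hvl
      have hi := hmem i hvi
      have hj := hmem j hvj
      have hli : l = i ∨ l = j := by
        rcases hl with rfl | rfl <;> rcases hi with rfl | rfl <;>
          rcases hj with h | h <;> simp_all
      rcases hli with rfl | rfl
      · left; simp [hlX]
      · right; simp [hlX]
    · ext i; simp
  · rintro ⟨β, hind, hcov, rfl⟩
    constructor
    · intro i hi j hj hij
      simp only [Finset.mem_filter] at hi hj
      rw [Finset.disjoint_left]
      intro v hvi hvj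
      rcases hind i j hij ⟨v, Finset.mem_inter.2 ⟨hvi, hvj⟩⟩ with h | h <;>
        simp_all
    · intro v hv0
      obtain ⟨a, b, hab, hset⟩ := Finset.card_eq_two.1 (hdeg v)
      have hva : v ∈ E a := by
        have : a ∈ Finset.univ.filter (fun i => v ∈ E i) := by
          rw [hset]; simp
        simpa using this
      have hvb : v ∈ E b := by
        have : b ∈ Finset.univ.filter (fun i => v ∈ E i) := by
          rw [hset]; simp
        simpa using this
      rcases hcov a b v hab hva hvb hv0 with h | h
      · exact ⟨a, by simp [h], hva⟩
      · exact ⟨b, by simp [h], hvb⟩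
end

section
/- In the hypergraph program H_{n,k}, if λ : {1,...,k} → {1,...,n} is such that C = {λ(i) : 1 ≤ i ≤ k} is a k-clique in the graph given by the input e, then the set X consisting of the hyperedges f^{iλ(i)} for 1 ≤ i ≤ k, the hyperedges h^{jj'} with j ∉ C and j' ∈ C, and the hyperedges h^{jj'} with j, j' ∉ C and j < j', is an independent set covering all zero-labelled vertices of H_{n,k} under e. -/
/-- Vertices of the hypergraph program `H_{n,k}`: `w j j'` (for `j < j'`,
labelled with the edge variable `e_{jj'}`), `u j j'` (for `j ≠ j'`, labelled 1)
and `v i` (labelled 0). -/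
inductive Vtx (n k : ℕ) : Type
  | w : Fin n → Fin n → Vtx n k
  | u : Fin n → Fin n → Vtx n k
  | v : Fin k → Vtx n k

/-- Hyperedges of `H_{n,k}`: `h j j' = {w_{jj'}, u_{jj'}}` (for `j ≠ j'`, where
`w_{jj'}` denotes the unordered vertex) and `f i j = {v i} ∪ {u_{jj'} : j' ≠ j}`. -/
inductive Edg (n k : ℕ) : Type
  | h : Fin n → Fin n → Edg n k
  | f : Fin k → Fin n → Edg n k

/-- Membership of a vertex in a hyperedge of `H_{n,k}`. -/
def memE {n k : ℕ} : Vtx n k → Edg n k → Prop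
  | .w a b, .h c c' => (a = c ∧ b = c') ∨ (a = c' ∧ b = c)
  | .u a b, .h c c' => a = c ∧ b = c'
  | .u a b, .f _ j => a = j ∧ b ≠ j
  | .v i, .f i' _ => i = i'
  | _, _ => False

/-- Legal hyperedges: `h j j'` only for `j ≠ j'`. -/
def legalE {n k : ℕ} : Edg n k → Prop
  | .h c c' => c ≠ c'
  | .f _ _ => True

/-- `X` is an independent set of hyperedges (pairwise disjoint). -/
def IndepX {n k : ℕ} (X : Set (Edg n k)) : Prop :=
  ∀ e ∈ X, ∀ e' ∈ X, e ≠ e' → ∀ x : Vtx n k, ¬(memE x e ∧ memE x e')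

/-- `X` covers all vertices whose label evaluates to 0 under the edge input `g`:
all the `v i` (labelled 0) and all the `w j j'` with `j < j'` and `g j j' = 0`. -/
def CoversZeros {n k : ℕ} (g : Fin n → Fin n → Bool) (X : Set (Edg n k)) : Prop :=
  (∀ i : Fin k, ∃ e ∈ X, memE (Vtx.v i) e) ∧
  (∀ j j' : Fin n, j < j' → g j j' = false → ∃ e ∈ X, memE (Vtx.w j j') e)

/-- The explicit cover determined by a clique `lam`: the hyperedges
`f i (lam i)`, the `h j j'` with `j ∉ C`, `j' ∈ C`, and the `h j j'` with
`j, j' ∉ C` and `j < j'`, where `C` is the range of `lam`. -/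
def Xset {n k : ℕ} (lam : Fin k → Fin n) : Set (Edg n k) :=
  {e | (∃ i : Fin k, e = Edg.f i (lam i)) ∨
    (∃ j j' : Fin n, e = Edg.h j j' ∧ j ∉ Set.range lam ∧ j' ∈ Set.range lam) ∨
    (∃ j j' : Fin n, e = Edg.h j j' ∧ j ∉ Set.range lam ∧ j' ∉ Set.range lam ∧ j < j')}

/-- If `lam` enumerates a `k`-clique of the graph given by `g`, then `Xset lam`
is an independent set of hyperedges of `H_{n,k}` covering all zero-labelled
vertices under `g`. -/
theorem stmt_5 (n k : ℕ) (g : Fin n → Fin n → Bool) (lam : Fin k → Fin n)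
    (hinj : Function.Injective lam)
    (hcl : ∀ i i' : Fin k, lam i < lam i' → g (lam i) (lam i') = true) :
    IndepX (Xset lam) ∧ CoversZeros g (Xset lam) := by
  constructor
  · rintro e he e' he' hne x ⟨hx, hx'⟩
    rcases he with ⟨i, rfl⟩ | ⟨j, j', rfl, hj, hj'⟩ | ⟨j, j', rfl, hj, hj', hlt⟩
    · rcases he' with ⟨i2, rfl⟩ | ⟨j2, j2', rfl, hj2, hj2'⟩ | ⟨j2, j2', rfl, hj2, hj2', hlt2⟩
      · cases x <;> simp only [memE] at hx hx'
        · exact hne (by rw [hinj (hx.1.symm.trans hx'.1)])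
        · obtain rfl := hx; obtain rfl := hx'; exact hne rfl
      all_goals
        cases x <;> simp only [memE] at hx hx'
        exact hj2 ⟨i, hx.1.symm.trans hx'.1⟩
    all_goals
      rcases he' with ⟨i2, rfl⟩ | ⟨j2, j2', rfl, hj2, hj2'⟩ | ⟨j2, j2', rfl, hj2, hj2', hlt2⟩
    all_goals cases x <;> simp only [memE] at hx hx'
    all_goals
      first
      | exact hj ⟨i2, (hx.1.symm.trans hx'.1).symm⟩
      | (obtain ⟨rfl, rfl⟩ := hx; obtain ⟨rfl, rfl⟩ := hx'; exact hne rfl; done)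
      | (obtain ⟨rfl, rfl⟩ | ⟨rfl, rfl⟩ := hx <;> obtain ⟨rfl, rfl⟩ | ⟨rfl, rfl⟩ := hx' <;>
          first
          | exact hne rfl
          | exact hj2 hj'
          | exact hj2' hj'
          | exact hj' hj2'
          | exact hj hj2'
          | exact absurd hlt hlt2.asymm)
  constructor
  · intro i
    exact ⟨Edg.f i (lam i), Or.inl ⟨i, rfl⟩, rfl⟩
  · intro j j' hlt hg
    by_cases hj : j ∈ Set.range lam <;> by_cases hj' : j' ∈ Set.range lam
    · obtain ⟨i, rfl⟩ := hj; obtain ⟨i', rfl⟩ := hj'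
      rw [hcl i i' hlt] at hg; exact absurd hg (by simp)
    · exact ⟨Edg.h j' j, Or.inr (Or.inl ⟨j', j, rfl, hj', hj⟩), Or.inr ⟨rfl, rfl⟩⟩
    · exact ⟨Edg.h j j', Or.inr (Or.inl ⟨j, j', rfl, hj, hj'⟩), Or.inl ⟨rfl, rfl⟩⟩
    · exact ⟨Edg.h j j', Or.inr (Or.inr ⟨j, j', rfl, hj, hj', hlt⟩), Or.inl ⟨rfl, rfl⟩⟩
end

section
/- Let H = (V, E) be a hypergraph of degree 2 equipped with maps i_1, i_2 : V → E such that i_1(v) ≠ i_2(v) and v ∈ i_1(v) ∩ i_2(v) for every v. For inputs α : V → {0,1} and β : E → {0,1}, define a 'homomorphism instance' as a map h : E → {a} ∪ {w_e : e ∈ E} such that for every v ∈ V: either h(i_1(v)) = h(i_2(v)) = a and α(v) = 1, or there exists e ∈ {i_1(v), i_2(v)} with h(e) = w_e, β(e) = 1, and h(e') = a for the other element e' of {i_1(v), i_2(v)}. Then such an h exists if and only if there is an independent subset X ⊆ E with β(e) = 1 for all e ∈ X and α(v) = 1 for all v not covered by X. -/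
/-- `v` is covered by the set `X` of hyperedges (recall `v` belongs exactly to
the hyperedges `i1 v` and `i2 v`). -/
def CoveredBy {V E : Type} (i1 i2 : V → E) (X : Set E) (v : V) : Prop :=
  i1 v ∈ X ∨ i2 v ∈ X

/-- `X` is independent: distinct hyperedges of `X` share no vertex. -/
def IndepBy {V E : Type} (i1 i2 : V → E) (X : Set E) : Prop :=
  ∀ e ∈ X, ∀ e' ∈ X, e ≠ e' → ∀ v : V,
    ¬((i1 v = e ∨ i2 v = e) ∧ (i1 v = e' ∨ i2 v = e'))

/-- A 'homomorphism instance' `h : E → Option E`, where `none` stands for the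
individual `a` and `some e` for the labelled null `w_e`: for every vertex `v`,
either both its hyperedges are mapped to `a` and `α v = 1`, or exactly one of
them, `e`, is mapped to `w_e` with `β e = 1`, the other being mapped to `a`. -/
def HomInst {V E : Type} (i1 i2 : V → E) (α : V → Bool) (β : E → Bool)
    (h : E → Option E) : Prop :=
  ∀ v : V,
    (h (i1 v) = none ∧ h (i2 v) = none ∧ α v = true) ∨
    (∃ e : E, (e = i1 v ∨ e = i2 v) ∧ h e = some e ∧ β e = true ∧
      ∀ e' : E, (e' = i1 v ∨ e' = i2 v) → e' ≠ e → h e' = none)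

/-!
Given a homomorphism instance `h`, the hyperedges `e` with `h e = w_e` and `β e = 1` form the
required cover: at each vertex at most one of its two hyperedges is sent to its own labelled
null, and a vertex none of whose hyperedges is, must be mapped entirely to `a`, forcing
`α v = 1`. Conversely, an independent cover `X` yields `h e = w_e` on `X` and `h e = a`
elsewhere; independence guarantees that at most one hyperedge of each vertex lies in `X`.
-/

section

variable {V E : Type} {i1 i2 : V → E} {α : V → Bool} {β : E → Bool}

theorem IndepBy.mono {X Y : Set E} (hY : IndepBy i1 i2 Y) (hXY : X ⊆ Y) : IndepBy i1 i2 X :=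
  fun e he e' he' => hY e (hXY he) e' (hXY he')

theorem IndepBy.eq_of_mem {X : Set E} (hX : IndepBy i1 i2 X) {v : V} (h1 : i1 v ∈ X)
    (h2 : i2 v ∈ X) : i1 v = i2 v := by
  by_contra hne
  exact hX _ h1 _ h2 hne v ⟨Or.inl rfl, Or.inr rfl⟩

theorem HomInst.eq_of_fixed {h : E → Option E} (hh : HomInst i1 i2 α β h) {v : V} {e e' : E}
    (hv : e = i1 v ∨ e = i2 v) (hv' : e' = i1 v ∨ e' = i2 v) (he : h e = some e)
    (he' : h e' = some e') : e = e' := by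
  rcases hh v with ⟨h1, h2, -⟩ | ⟨e₀, -, -, -, hrest⟩
  · rcases hv with rfl | rfl <;> simp_all
  · have eq_e₀ : ∀ x, (x = i1 v ∨ x = i2 v) → h x = some x → x = e₀ := fun x hx hsome =>
      by_contra fun hne => by simp [hrest x hx hne] at hsome
    rw [eq_e₀ e hv he, eq_e₀ e' hv' he']

theorem HomInst.indepBy_fixedPoints {h : E → Option E} (hh : HomInst i1 i2 α β h) :
    IndepBy i1 i2 {e | h e = some e} := by
  rintro e he e' he' hee v ⟨hv, hv'⟩
  exact hee (hh.eq_of_fixed (by tauto) (by tauto) he he')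

theorem HomInst.alpha_of_not_coveredBy {h : E → Option E} (hh : HomInst i1 i2 α β h) {v : V}
    (hv : ¬ CoveredBy i1 i2 {e | h e = some e ∧ β e = true} v) : α v = true := by
  rcases hh v with ⟨-, -, hα⟩ | ⟨e, hev, hsome, hβ, -⟩
  · exact hα
  · exact absurd (by rcases hev with rfl | rfl <;> simp [CoveredBy, hsome, hβ]) hv

open Classical in
theorem homInst_of_indepBy {X : Set E} (hX : IndepBy i1 i2 X) (hβ : ∀ e ∈ X, β e = true)
    (hα : ∀ v : V, ¬ CoveredBy i1 i2 X v → α v = true) :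
    HomInst i1 i2 α β (fun e => if e ∈ X then some e else none) := by
  intro v
  by_cases h1 : i1 v ∈ X
  · refine Or.inr ⟨i1 v, Or.inl rfl, if_pos h1, hβ _ h1, ?_⟩
    rintro e' (rfl | rfl) hne
    · exact absurd rfl hne
    · exact if_neg fun h2 => hne (hX.eq_of_mem h1 h2).symm
  by_cases h2 : i2 v ∈ X
  · refine Or.inr ⟨i2 v, Or.inr rfl, if_pos h2, hβ _ h2, ?_⟩
    rintro e' (rfl | rfl) hne
    · exact if_neg h1
    · exact absurd rfl hne
  · exact Or.inl ⟨if_neg h1, if_neg h2, hα v (by simp [CoveredBy, h1, h2])⟩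

end

theorem stmt_10_general {V E : Type} (i1 i2 : V → E)
    (α : V → Bool) (β : E → Bool) :
    (∃ h : E → Option E, HomInst i1 i2 α β h) ↔
    (∃ X : Set E, IndepBy i1 i2 X ∧ (∀ e ∈ X, β e = true) ∧
      ∀ v : V, ¬ CoveredBy i1 i2 X v → α v = true) := by
  constructor
  · rintro ⟨h, hh⟩
    exact ⟨{e | h e = some e ∧ β e = true},
      hh.indepBy_fixedPoints.mono fun _ he => he.1, fun _ he => he.2,
      fun _ hv => hh.alpha_of_not_coveredBy hv⟩
  · rintro ⟨X, hX, hβ, hα⟩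
    exact ⟨_, homInst_of_indepBy hX hβ hα⟩

/-- For a degree-2 hypergraph (every `v` lies in exactly the two hyperedges
`i1 v ≠ i2 v`), a homomorphism instance exists iff there is an independent
`X ⊆ E` with `β e = 1` on `X` and `α v = 1` for every uncovered vertex. -/
theorem stmt_10 {V E : Type} (i1 i2 : V → E) (hne : ∀ v : V, i1 v ≠ i2 v)
    (α : V → Bool) (β : E → Bool) :
    (∃ h : E → Option E, HomInst i1 i2 α β h) ↔
    (∃ X : Set E, IndepBy i1 i2 X ∧ (∀ e ∈ X, β e = true) ∧
      ∀ v : V, ¬ CoveredBy i1 i2 X v → α v = true) :=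
  stmt_10_general i1 i2 α β
end

section
/- Let G be a directed multigraph with arcs labelled by Boolean literals or constants, and for an assignment α write u →_α v if there is a directed path from u to v all of whose arc labels evaluate to 1 under α. If B is the '2-SAT implication graph' of a degree-2 hypergraph program H (with vertices e_i^+, e_i^- for each hyperedge e_i, arcs (e_i^+, e_j^-) labelled 1 whenever e_i ∩ e_j ≠ ∅, and arcs (e_i^-, e_j^+) labelled ¬v for each vertex v ∈ e_i ∩ e_j), then for every assignment α: there is no independent set of hyperedges of H covering all zeros under α if and only if for some i both e_i^- →_α e_i^+ and e_i^+ →_α e_i^- hold in B. -/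
/-- One arc of the implication graph `B` of a degree-2 hypergraph program,
usable under the assignment `σ`: `(i, true)` is the node `e_i⁺` and
`(i, false)` the node `e_i⁻`; arcs `e_i⁺ → e_j⁻` (labelled 1) exist whenever
`e_i ∩ e_j ≠ ∅`, and arcs `e_i⁻ → e_j⁺` labelled `¬v` (usable iff the label of
`v` evaluates to 0 under `σ`) exist for each `v ∈ e_i ∩ e_j`. -/
def impStep {V α : Type} {k : ℕ} (E : Fin k → Finset V) (lab : V → HGPLabel α)
    (σ : α → Bool) (x y : Fin k × Bool) : Prop :=
  (x.2 = true ∧ y.2 = false ∧ x.1 ≠ y.1 ∧ ∃ v : V, v ∈ E x.1 ∧ v ∈ E y.1) ∨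
  (x.2 = false ∧ y.2 = true ∧ x.1 ≠ y.1 ∧
    ∃ v : V, v ∈ E x.1 ∧ v ∈ E y.1 ∧ (lab v).eval σ = false)

open Relation

namespace ImplicationGraph

variable {ι : Type*} (r : ι × Bool → ι × Bool → Prop)

def IsSkew : Prop :=
  ∀ ⦃x y : ι × Bool⦄, r x y → r (y.1, !y.2) (x.1, !x.2)

def IsModel (f : ι → Bool) : Prop :=
  ∀ ⦃x y : ι × Bool⦄, r x y → x.2 = f x.1 → y.2 = f y.1

structure IsClosedConsistent (S : Set (ι × Bool)) : Prop where
  closed : ∀ ⦃x y⦄, x ∈ S → r x y → y ∈ S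
  consistent : ∀ i, (i, true) ∈ S → (i, false) ∉ S

variable {r}

theorem IsSkew.reflTransGen (hr : IsSkew r) {x y : ι × Bool} (h : ReflTransGen r x y) :
    ReflTransGen r (y.1, !y.2) (x.1, !x.2) := by
  induction h with
  | refl => exact .refl
  | tail _ hstep ih => exact .head (hr hstep) ih

theorem IsModel.reflTransGen {f : ι → Bool} (hf : IsModel r f) {x y : ι × Bool}
    (h : ReflTransGen r x y) (hx : x.2 = f x.1) : y.2 = f y.1 := by
  induction h with
  | refl => exact hx
  | tail _ hstep ih => exact hf hstep ih

theorem IsModel.not_cycle {f : ι → Bool} (hf : IsModel r f) (i : ι) :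
    ¬(ReflTransGen r (i, false) (i, true) ∧ ReflTransGen r (i, true) (i, false)) := by
  rintro ⟨hft, htf⟩
  cases hi : f i
  · exact absurd (hf.reflTransGen hft hi.symm) (by simp [hi])
  · exact absurd (hf.reflTransGen htf hi.symm) (by simp [hi])

theorem IsClosedConsistent.reflTransGen_mem {S : Set (ι × Bool)} (hS : IsClosedConsistent r S)
    {x y : ι × Bool} (h : ReflTransGen r x y) (hx : x ∈ S) : y ∈ S := by
  induction h with
  | refl => exact hx
  | tail _ hstep ih => exact hS.closed ih hstep

theorem exists_not_reflTransGen_neg {i : ι}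
    (h : ¬(ReflTransGen r (i, false) (i, true) ∧ ReflTransGen r (i, true) (i, false))) :
    ∃ b, ¬ReflTransGen r (i, b) (i, !b) := by
  by_cases htf : ReflTransGen r (i, true) (i, false)
  · exact ⟨false, fun hft => h ⟨hft, htf⟩⟩
  · exact ⟨true, htf⟩

theorem IsClosedConsistent.union_reachable (hr : IsSkew r) {S : Set (ι × Bool)}
    (hS : IsClosedConsistent r S) {i : ι} {b : Bool} (hiS : ∀ c, (i, c) ∉ S)
    (hb : ¬ReflTransGen r (i, b) (i, !b)) :
    IsClosedConsistent r (S ∪ {y | ReflTransGen r (i, b) y}) := by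
  have hSneg : ∀ y ∈ S, ¬ReflTransGen r (i, b) (y.1, !y.2) := fun y hy h =>
    hiS (!b) (hS.reflTransGen_mem (by simpa using hr.reflTransGen h) hy)
  refine ⟨?_, fun j hjt hjf => ?_⟩
  · rintro x y (hx | hx) hxy
    · exact .inl (hS.closed hx hxy)
    · exact .inr (ReflTransGen.tail hx hxy)
  · rcases hjt with hjt | hjt <;> rcases hjf with hjf | hjf
    · exact hS.consistent j hjt hjf
    · exact hSneg _ hjt hjf
    · exact hSneg _ hjf hjt
    · exact hb (ReflTransGen.trans hjt (by simpa using hr.reflTransGen hjf))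

theorem IsClosedConsistent.exists_isModel {S : Set (ι × Bool)} (hS : IsClosedConsistent r S)
    (htot : ∀ i, (i, true) ∈ S ∨ (i, false) ∈ S) :
    ∃ f, IsModel r f := by
  classical
  have hmem : ∀ x : ι × Bool, x ∈ S ↔ x.2 = decide ((x.1, true) ∈ S) := by
    rintro ⟨i, _ | _⟩
    · by_cases h : (i, true) ∈ S
      · simp [h, hS.consistent i h]
      · simp [h, (htot i).resolve_left h]
    · simp
  exact ⟨fun i => decide ((i, true) ∈ S), fun x y hxy hx =>
    (hmem y).1 (hS.closed ((hmem x).2 hx) hxy)⟩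

theorem exists_isModel_of_forall_not_cycle [Finite ι] (hr : IsSkew r)
    (h : ∀ i, ¬(ReflTransGen r (i, false) (i, true) ∧ ReflTransGen r (i, true) (i, false))) :
    ∃ f, IsModel r f := by
  have hempty : IsClosedConsistent r ∅ := ⟨fun _ _ hx => hx.elim, fun _ hi => hi.elim⟩
  obtain ⟨S, hS, hmax⟩ :=
    (Set.toFinite {S | IsClosedConsistent r S}).exists_maximal ⟨∅, hempty⟩
  refine hS.exists_isModel fun i => ?_
  by_contra! hiS
  have hiS' : ∀ c, (i, c) ∉ S := by rintro (_ | _) <;> simp [hiS]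
  obtain ⟨b, hb⟩ := exists_not_reflTransGen_neg (h i)
  have hle := hmax (hS.union_reachable hr hiS' hb) Set.subset_union_left
  exact hiS' b (hle (.inr .refl))

theorem exists_isModel_iff [Finite ι] (hr : IsSkew r) :
    (∃ f, IsModel r f) ↔
      ∀ i, ¬(ReflTransGen r (i, false) (i, true) ∧ ReflTransGen r (i, true) (i, false)) :=
  ⟨fun ⟨_, hf⟩ => hf.not_cycle, exists_isModel_of_forall_not_cycle hr⟩

end ImplicationGraph

open ImplicationGraph

section HypergraphProgram

variable {V α : Type} {k : ℕ} (E : Fin k → Finset V) (lab : V → HGPLabel α) (σ : α → Bool)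

def IsIndependentZeroCover (X : Finset (Fin k)) : Prop :=
  (∀ i ∈ X, ∀ j ∈ X, i ≠ j → Disjoint (E i) (E j)) ∧
    ∀ v : V, (lab v).eval σ = false → ∃ i ∈ X, v ∈ E i

theorem impStep_isSkew : IsSkew (impStep E lab σ) := by
  rintro x y (⟨hx, hy, hne, v, hvx, hvy⟩ | ⟨hx, hy, hne, v, hvx, hvy, hv⟩)
  · exact .inl ⟨by simp [hy], by simp [hx], hne.symm, v, hvy, hvx⟩
  · exact .inr ⟨by simp [hy], by simp [hx], hne.symm, v, hvy, hvx, hv⟩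

variable [DecidableEq V] {E lab σ}

theorem exists_ne_mem_of_two_le_card {v : V}
    (hv : 2 ≤ (Finset.univ.filter (fun i => v ∈ E i)).card) :
    ∃ i j, i ≠ j ∧ v ∈ E i ∧ v ∈ E j := by
  obtain ⟨i, hi, j, hj, hij⟩ := Finset.one_lt_card.mp hv
  exact ⟨i, j, hij, (Finset.mem_filter.mp hi).2, (Finset.mem_filter.mp hj).2⟩

theorem eq_of_mem_of_card_le_two {v : V}
    (hv : (Finset.univ.filter (fun i => v ∈ E i)).card ≤ 2) {a b c : Fin k}
    (ha : v ∈ E a) (hb : v ∈ E b) (hc : v ∈ E c) (hab : a ≠ b) (hca : c ≠ a) : c = b := by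
  by_contra hcb
  have : 2 < (Finset.univ.filter (fun i => v ∈ E i)).card :=
    Finset.two_lt_card.mpr ⟨a, by simpa, b, by simpa, c, by simpa, hab, hca.symm, Ne.symm hcb⟩
  omega

theorem IsIndependentZeroCover.isModel
    (hdeg : ∀ v : V, (Finset.univ.filter (fun i => v ∈ E i)).card ≤ 2) {X : Finset (Fin k)}
    (hX : IsIndependentZeroCover E lab σ X) :
    IsModel (impStep E lab σ) (fun i => decide (i ∈ X)) := by
  rintro ⟨a, _⟩ ⟨b, _⟩ (⟨rfl, rfl, hab, v, ha, hb⟩ | ⟨rfl, rfl, hab, v, ha, hb, hv⟩) hx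
  · have haX : a ∈ X := by simpa using hx.symm
    suffices b ∉ X by simpa
    exact fun hbX => Finset.not_disjoint_iff.mpr ⟨v, ha, hb⟩ (hX.1 a haX b hbX hab)
  · have haX : a ∉ X := by simpa using hx.symm
    obtain ⟨c, hcX, hc⟩ := hX.2 v hv
    have hcb : c = b :=
      eq_of_mem_of_card_le_two (hdeg v) ha hb hc hab (by rintro rfl; exact haX hcX)
    simpa [← hcb]

theorem isIndependentZeroCover_of_isModel
    (hdeg : ∀ v : V, 2 ≤ (Finset.univ.filter (fun i => v ∈ E i)).card) {f : Fin k → Bool}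
    (hf : IsModel (impStep E lab σ) f) :
    IsIndependentZeroCover E lab σ (Finset.univ.filter (fun i => f i = true)) := by
  refine ⟨fun i hi j hj hij => ?_, fun v hv => ?_⟩
  · rw [Finset.disjoint_left]
    intro v hvi hvj
    have hstep : impStep E lab σ (i, true) (j, false) := .inl ⟨rfl, rfl, hij, v, hvi, hvj⟩
    have := hf hstep (Finset.mem_filter.mp hi).2.symm
    simp [(Finset.mem_filter.mp hj).2] at this
  · obtain ⟨a, b, hab, ha, hb⟩ := exists_ne_mem_of_two_le_card (hdeg v)
    cases hfa : f a
    · have hstep : impStep E lab σ (a, false) (b, true) := .inr ⟨rfl, rfl, hab, v, ha, hb, hv⟩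
      exact ⟨b, by simpa using (hf hstep hfa.symm).symm, hb⟩
    · exact ⟨a, by simpa using hfa, ha⟩

theorem exists_isIndependentZeroCover_iff
    (hdeg : ∀ v : V, (Finset.univ.filter (fun i => v ∈ E i)).card = 2) :
    (∃ X, IsIndependentZeroCover E lab σ X) ↔ ∃ f, IsModel (impStep E lab σ) f :=
  ⟨fun ⟨_, hX⟩ => ⟨_, hX.isModel fun v => (hdeg v).le⟩,
    fun ⟨_, hf⟩ => ⟨_, isIndependentZeroCover_of_isModel (fun v => (hdeg v).ge) hf⟩⟩

end HypergraphProgram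

/-- For a degree-2 hypergraph program, there is no independent set of
hyperedges covering all zeros under `σ` iff for some hyperedge `e_i` the
implication graph has directed paths both from `e_i⁻` to `e_i⁺` and from
`e_i⁺` to `e_i⁻`. -/
theorem stmt_12 {V α : Type} [DecidableEq V] {k : ℕ} (E : Fin k → Finset V)
    (lab : V → HGPLabel α)
    (hdeg : ∀ v : V, (Finset.univ.filter (fun i => v ∈ E i)).card = 2) :
    ∀ σ : α → Bool,
      (¬ ∃ X : Finset (Fin k),
        (∀ i ∈ X, ∀ j ∈ X, i ≠ j → Disjoint (E i) (E j)) ∧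
        ∀ v : V, (lab v).eval σ = false → ∃ i ∈ X, v ∈ E i) ↔
      ∃ i : Fin k,
        Relation.ReflTransGen (impStep E lab σ) (i, false) (i, true) ∧
        Relation.ReflTransGen (impStep E lab σ) (i, true) (i, false) := by
  intro σ
  have h : (∃ X, IsIndependentZeroCover E lab σ X) ↔ _ :=
    (exists_isIndependentZeroCover_iff hdeg).trans
    (exists_isModel_iff (impStep_isSkew E lab σ))
  simpa only [IsIndependentZeroCover, not_forall, not_not] using not_congr h
end

section
/- For any Boolean function f computed by a hypergraph program H (arbitrary degree) of size m, there is a nondeterministic Boolean circuit C(x, y) of size polynomial in m computing f: the advice variables y correspond to hyperedges, and C(α, β) = 1 iff the set {e : β(e) = 1} is an independent set of hyperedges of H covering all vertices whose labels evaluate to 0 under α; consequently, for every α, f(α) = 1 iff there exists β with C(α, β) = 1. Moreover, if H is monotone then C can be chosen monotone (negations applied only to advice variables y). -/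
/-- Gates of a Boolean circuit over inputs `ι`. -/
inductive BGate (ι : Type) : Type
  | var (p : ι) : BGate ι
  | const (b : Bool) : BGate ι
  | not (i : ℕ) : BGate ι
  | and (i j : ℕ) : BGate ι
  | or (i j : ℕ) : BGate ι

/-- A Boolean circuit: `m` gates (wires only from smaller to larger indices)
and a designated output gate. -/
structure BCircuit (ι : Type) where
  m : ℕ
  gate : ℕ → BGate ι
  out : ℕ

/-- The value of gate `k` under input `σ` (references not to strictly earlier
gates, or out of range, evaluate to `false`). -/
def BCircuit.evalAux {ι : Type} (C : BCircuit ι) (σ : ι → Bool) (k : ℕ) : Bool :=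
  if k < C.m then
    match C.gate k with
    | .var p => σ p
    | .const b => b
    | .not i => if _ : i < k then !(C.evalAux σ i) else false
    | .and i j =>
        (if _ : i < k then C.evalAux σ i else false) &&
        (if _ : j < k then C.evalAux σ j else false)
    | .or i j =>
        (if _ : i < k then C.evalAux σ i else false) ||
        (if _ : j < k then C.evalAux σ j else false)
  else false
termination_by k

def BCircuit.eval {ι : Type} (C : BCircuit ι) (σ : ι → Bool) : Bool :=
  C.evalAux σ C.out

variable {ι : Type}

namespace BCircuit

variable (C : BCircuit ι) (σ : ι → Bool)

lemma evalAux_var {k : ℕ} {p : ι} (hk : k < C.m) (hg : C.gate k = .var p) :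
    C.evalAux σ k = σ p := by
  rw [evalAux, if_pos hk, hg]

lemma evalAux_const {k : ℕ} {b : Bool} (hk : k < C.m) (hg : C.gate k = .const b) :
    C.evalAux σ k = b := by
  rw [evalAux, if_pos hk, hg]

lemma evalAux_not {k i : ℕ} (hk : k < C.m) (hg : C.gate k = .not i) (hik : i < k) :
    C.evalAux σ k = !C.evalAux σ i := by
  rw [evalAux, if_pos hk, hg]
  simp only [dif_pos hik]

lemma evalAux_and {k i j : ℕ} (hk : k < C.m) (hg : C.gate k = .and i j)
    (hik : i < k) (hjk : j < k) :
    C.evalAux σ k = (C.evalAux σ i && C.evalAux σ j) := by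
  rw [evalAux, if_pos hk, hg]
  simp only [dif_pos hik, dif_pos hjk]

lemma evalAux_or {k i j : ℕ} (hk : k < C.m) (hg : C.gate k = .or i j)
    (hik : i < k) (hjk : j < k) :
    C.evalAux σ k = (C.evalAux σ i || C.evalAux σ j) := by
  rw [evalAux, if_pos hk, hg]
  simp only [dif_pos hik, dif_pos hjk]

def ofList (L : List (BGate ι)) : BCircuit ι :=
  ⟨L.length, fun k => L.getD k (.const false), L.length - 1⟩

variable {σ}

@[simp]
lemma ofList_m (L : List (BGate ι)) : (ofList L).m = L.length := rfl

lemma ofList_gate (L : List (BGate ι)) {k : ℕ} (hk : k < L.length) :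
    (ofList L).gate k = L[k] :=
  L.getD_eq_getElem _ hk

lemma ofList_gate_concat (L : List (BGate ι)) (g : BGate ι) :
    (ofList (L ++ [g])).gate L.length = g := by
  simp [ofList]

lemma eval_ofList_concat (L : List (BGate ι)) (g : BGate ι) :
    (ofList (L ++ [g])).eval σ = (ofList (L ++ [g])).evalAux σ L.length := by
  simp [eval, ofList]

lemma evalAux_ofList_of_prefix {L M : List (BGate ι)} (hLM : L <+: M) :
    ∀ k < L.length, (ofList M).evalAux σ k = (ofList L).evalAux σ k := by
  obtain ⟨N, rfl⟩ := hLM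
  intro k
  induction k using Nat.strong_induction_on with
  | _ k ih =>
    intro hk
    have ih' : ∀ i < k, (ofList (L ++ N)).evalAux σ i = (ofList L).evalAux σ i :=
      fun i hi => ih i hi (hi.trans hk)
    have hgate : (ofList (L ++ N)).gate k = (ofList L).gate k := List.getD_append _ _ _ _ hk
    rw [evalAux, evalAux, hgate, if_pos (by simp; omega), if_pos (show k < (ofList L).m from hk)]
    cases (ofList L).gate k <;> simp +contextual [ih']

end BCircuit

inductive BExpr (ι : Type) : Type
  | var (p : ι)
  | const (b : Bool)
  | not (e : BExpr ι)
  | and (e f : BExpr ι)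
  | or (e f : BExpr ι)

namespace BExpr

def eval (σ : ι → Bool) : BExpr ι → Bool
  | .var p => σ p
  | .const b => b
  | .not e => !e.eval σ
  | .and e f => e.eval σ && f.eval σ
  | .or e f => e.eval σ || f.eval σ

def size : BExpr ι → ℕ
  | .var _ | .const _ => 1
  | .not e => e.size + 1
  | .and e f | .or e f => e.size + f.size + 1

/-- Every negation in `e` is applied directly to a variable satisfying `P`. -/
def NegOnly (P : ι → Prop) : BExpr ι → Prop
  | .var _ | .const _ => True
  | .not e => ∃ p, e = .var p ∧ P p
  | .and e f | .or e f => e.NegOnly P ∧ f.NegOnly P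

def conj (L : List (BExpr ι)) : BExpr ι := L.foldr .and (.const true)

def disj (L : List (BExpr ι)) : BExpr ι := L.foldr .or (.const false)

variable {σ : ι → Bool} {P : ι → Prop} {L : List (BExpr ι)}

lemma eval_conj : (conj L).eval σ = true ↔ ∀ c ∈ L, c.eval σ = true := by
  induction L with
  | nil => simp [conj, eval]
  | cons c L ih => simp [conj, eval, ← ih]

lemma eval_disj : (disj L).eval σ = true ↔ ∃ c ∈ L, c.eval σ = true := by
  induction L with
  | nil => simp [disj, eval]
  | cons c L ih => simp [disj, eval, ← ih]

lemma size_conj_le {B : ℕ} (h : ∀ c ∈ L, c.size ≤ B) :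
    (conj L).size ≤ L.length * (B + 1) + 1 := by
  induction L with
  | nil => simp [conj, size]
  | cons c L ih =>
      have hL := ih fun c hc => h c (by simp [hc])
      have hc := h c (by simp)
      simp only [conj, List.foldr_cons, size, List.length_cons] at *
      nlinarith

lemma size_disj_le {B : ℕ} (h : ∀ c ∈ L, c.size ≤ B) :
    (disj L).size ≤ L.length * (B + 1) + 1 := by
  induction L with
  | nil => simp [disj, size]
  | cons c L ih =>
      have hL := ih fun c hc => h c (by simp [hc])
      have hc := h c (by simp)
      simp only [disj, List.foldr_cons, size, List.length_cons] at *
      nlinarith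

lemma negOnly_conj (h : ∀ c ∈ L, c.NegOnly P) : (conj L).NegOnly P := by
  induction L with
  | nil => trivial
  | cons c L ih => exact ⟨h c (by simp), ih fun c hc => h c (by simp [hc])⟩

lemma negOnly_disj (h : ∀ c ∈ L, c.NegOnly P) : (disj L).NegOnly P := by
  induction L with
  | nil => trivial
  | cons c L ih => exact ⟨h c (by simp), ih fun c hc => h c (by simp [hc])⟩

/-- Appends the gates of `e` to `acc` in post-order; every gate refers to absolute positions
in the resulting list, and the root of `e` is its last gate. -/
def compile : BExpr ι → List (BGate ι) → List (BGate ι)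
  | .var p, acc => acc ++ [.var p]
  | .const b, acc => acc ++ [.const b]
  | .not e, acc =>
      let L := e.compile acc
      L ++ [.not (L.length - 1)]
  | .and e f, acc =>
      let L := e.compile acc
      let M := f.compile L
      M ++ [.and (L.length - 1) (M.length - 1)]
  | .or e f, acc =>
      let L := e.compile acc
      let M := f.compile L
      M ++ [.or (L.length - 1) (M.length - 1)]

lemma length_compile (e : BExpr ι) (acc : List (BGate ι)) :
    (e.compile acc).length = acc.length + e.size := by
  induction e generalizing acc <;> simp [compile, size, *] <;> omega

lemma length_lt_length_compile (e : BExpr ι) (acc : List (BGate ι)) :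
    acc.length < (e.compile acc).length := by
  cases e <;> simp [length_compile, size]

lemma prefix_compile (e : BExpr ι) (acc : List (BGate ι)) : acc <+: e.compile acc := by
  induction e generalizing acc with
  | var | const => exact List.prefix_append _ _
  | not e ih => exact (ih acc).trans (List.prefix_append _ _)
  | and e f ihe ihf | or e f ihe ihf =>
      exact ((ihe acc).trans (ihf _)).trans (List.prefix_append _ _)

def toCircuit (e : BExpr ι) : BCircuit ι :=
  BCircuit.ofList (e.compile [])

@[simp]
lemma toCircuit_m (e : BExpr ι) : e.toCircuit.m = e.size := by
  simp [toCircuit, length_compile]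

open BCircuit in
lemma eval_ofList_compile (e : BExpr ι) (acc : List (BGate ι)) :
    (ofList (e.compile acc)).eval σ = e.eval σ := by
  induction e generalizing acc with
  | var p => simp [compile, eval_ofList_concat, evalAux_var _ _ _ (ofList_gate_concat _ _), eval]
  | const b => simp [compile, eval_ofList_concat, evalAux_const _ _ _ (ofList_gate_concat _ _), eval]
  | not e ih =>
      have hL := length_lt_length_compile e acc
      rw [compile, eval_ofList_concat, evalAux_not _ _ (by simp) (ofList_gate_concat _ _) (by omega),
        evalAux_ofList_of_prefix (List.prefix_append _ _) _ (by omega)]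
      exact congrArg (!·) (ih acc)
  | and e f ihe ihf =>
      have hL := length_lt_length_compile e acc
      have hM := length_lt_length_compile f (e.compile acc)
      rw [compile, eval_ofList_concat,
        evalAux_and _ _ (by simp) (ofList_gate_concat _ _) (by omega) (by omega),
        evalAux_ofList_of_prefix (List.prefix_append _ _) _ (by omega),
        evalAux_ofList_of_prefix (List.prefix_append _ _) _ (by omega),
        evalAux_ofList_of_prefix (prefix_compile _ _) _ (by omega)]
      exact congrArg₂ (· && ·) (ihe acc) (ihf _)
  | or e f ihe ihf =>
      have hL := length_lt_length_compile e acc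
      have hM := length_lt_length_compile f (e.compile acc)
      rw [compile, eval_ofList_concat,
        evalAux_or _ _ (by simp) (ofList_gate_concat _ _) (by omega) (by omega),
        evalAux_ofList_of_prefix (List.prefix_append _ _) _ (by omega),
        evalAux_ofList_of_prefix (List.prefix_append _ _) _ (by omega),
        evalAux_ofList_of_prefix (prefix_compile _ _) _ (by omega)]
      exact congrArg₂ (· || ·) (ihe acc) (ihf _)

lemma eval_toCircuit (e : BExpr ι) : e.toCircuit.eval σ = e.eval σ :=
  eval_ofList_compile e []

end BExpr

/-- Every `not` gate of `L` reads a `var` gate whose variable satisfies `P`. -/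
def GatesNegOnly (P : ι → Prop) (L : List (BGate ι)) : Prop :=
  ∀ k i : ℕ, L[k]? = some (BGate.not i) → ∃ p, P p ∧ L[i]? = some (BGate.var p)

lemma GatesNegOnly.concat {P : ι → Prop} {L : List (BGate ι)} (hL : GatesNegOnly P L)
    {g : BGate ι} (hg : ∀ i, g = .not i → ∃ p, P p ∧ L[i]? = some (BGate.var p)) :
    GatesNegOnly P (L ++ [g]) := by
  have lift : ∀ {i : ℕ} {p}, L[i]? = some (BGate.var p) → (L ++ [g])[i]? = some (BGate.var p) := by
    grind
  intro k i hk
  rcases lt_trichotomy k L.length with hlt | rfl | hgt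
  · rw [List.getElem?_append_left hlt] at hk
    obtain ⟨p, hp, hi⟩ := hL k i hk
    exact ⟨p, hp, lift hi⟩
  · obtain ⟨p, hp, hi⟩ := hg i (by simpa using hk)
    exact ⟨p, hp, lift hi⟩
  · simp [List.getElem?_eq_none (show (L ++ [g]).length ≤ k by simpa using hgt)] at hk

lemma BExpr.gatesNegOnly_compile {P : ι → Prop} (e : BExpr ι) (he : e.NegOnly P)
    {acc : List (BGate ι)} (hacc : GatesNegOnly P acc) : GatesNegOnly P (e.compile acc) := by
  induction e generalizing acc with
  | var | const => exact hacc.concat (by simp)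
  | not e _ =>
      obtain ⟨p, rfl, hp⟩ := he
      exact hacc.concat (by simp) |>.concat fun i hi => ⟨p, hp, by simp [compile] at hi ⊢; simp [hi]⟩
  | and e f ihe ihf | or e f ihe ihf =>
      exact (ihf he.2 (ihe he.1 hacc)).concat (by simp)

lemma BExpr.toCircuit_not_gate {P : ι → Prop} {e : BExpr ι} (he : e.NegOnly P)
    {k i : ℕ} (hk : k < e.toCircuit.m) (hg : e.toCircuit.gate k = .not i) :
    i < e.toCircuit.m ∧ ∃ p, P p ∧ e.toCircuit.gate i = .var p := by
  have hgates := e.gatesNegOnly_compile he (acc := []) (by simp [GatesNegOnly])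
  rw [toCircuit, BCircuit.ofList_gate _ hk] at hg
  obtain ⟨p, hp, hi⟩ := hgates k i (by rw [List.getElem?_eq_getElem hk, hg])
  obtain ⟨hi, hgi⟩ := List.getElem?_eq_some_iff.mp hi
  exact ⟨hi, p, hp, hgi ▸ BCircuit.ofList_gate _ hi⟩

def HGPLabel.toBExpr {α K : Type} : HGPLabel α → BExpr (α ⊕ K)
  | .zero => .const false
  | .one => .const true
  | .pos p => .var (.inl p)
  | .neg p => .not (.var (.inl p))

lemma HGPLabel.eval_toBExpr {α K : Type} (l : HGPLabel α) (σ : α → Bool) (β : K → Bool) :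
    l.toBExpr.eval (Sum.elim σ β) = l.eval σ := by
  cases l <;> rfl

lemma HGPLabel.size_toBExpr_le {α K : Type} (l : HGPLabel α) : (l.toBExpr (K := K)).size ≤ 2 := by
  cases l <;> simp [HGPLabel.toBExpr, BExpr.size]

section HypergraphProgram

open BExpr

variable {V α : Type} [DecidableEq V] (lab : V → HGPLabel α) (E : Finset (Finset V))

noncomputable def conflictClauses : List (BExpr (α ⊕ E)) :=
  (E.attach.offDiag.filter fun p => ¬Disjoint p.1.1 p.2.1).toList.map
    fun p => .or (.not (.var (.inr p.1))) (.not (.var (.inr p.2)))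

noncomputable def coverClause (v : V) : BExpr (α ⊕ E) :=
  .or (lab v).toBExpr (disj ((E.attach.filter (v ∈ ·.1)).toList.map (.var ∘ .inr)))

noncomputable def hgpFormula [Fintype V] : BExpr (α ⊕ E) :=
  .and (conj (conflictClauses E)) (conj (Finset.univ.toList.map (coverClause lab E)))

variable {lab E} (σ : α → Bool) (β : E → Bool)

lemma eval_conj_conflictClauses :
    (conj (conflictClauses (α := α) E)).eval (Sum.elim σ β) = true ↔
      {e | β e = true}.Pairwise (fun e e' => Disjoint e.1 e'.1) := by
  simp only [eval_conj, conflictClauses, List.forall_mem_map, Finset.mem_toList, Finset.mem_filter,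
    Finset.mem_offDiag, Finset.mem_attach, true_and, Prod.forall, eval, Sum.elim_inr,
    Bool.or_eq_true, Bool.not_eq_true', Set.Pairwise, Set.mem_ofPred_eq]
  constructor
  · intro h e he e' he' hne
    by_contra hd
    simpa [he, he'] using h e e' ⟨hne, hd⟩
  · rintro h e e' ⟨hne, hd⟩
    by_contra! hβ
    exact hd (h (by simpa using hβ.1) (by simpa using hβ.2) hne)

lemma eval_coverClause (v : V) :
    (coverClause lab E v).eval (Sum.elim σ β) = true ↔
      ((lab v).eval σ = false → ∃ e, β e = true ∧ v ∈ e.1) := by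
  simp only [coverClause, eval, Bool.or_eq_true, HGPLabel.eval_toBExpr, eval_disj,
    List.mem_map, exists_exists_and_eq_and, Finset.mem_toList, Finset.mem_filter,
    Finset.mem_attach, true_and, Function.comp_apply, Sum.elim_inr]
  cases (lab v).eval σ <;> simp [and_comm]

lemma eval_hgpFormula [Fintype V] :
    (hgpFormula lab E).eval (Sum.elim σ β) = true ↔
      {e | β e = true}.Pairwise (fun e e' => Disjoint e.1 e'.1) ∧
        ∀ v, (lab v).eval σ = false → ∃ e, β e = true ∧ v ∈ e.1 := by
  rw [hgpFormula, eval, Bool.and_eq_true, eval_conj_conflictClauses, eval_conj]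
  simp only [List.forall_mem_map, Finset.mem_toList, Finset.mem_univ, true_implies, eval_coverClause]

lemma size_conj_conflictClauses_le :
    (conj (conflictClauses (α := α) E)).size ≤ 6 * E.card ^ 2 + 1 := by
  have hlen : (conflictClauses (α := α) E).length ≤ E.card ^ 2 := by
    simp only [conflictClauses, List.length_map, Finset.length_toList]
    calc _ ≤ E.attach.offDiag.card := Finset.card_filter_le _ _
      _ ≤ E.card ^ 2 := by simp [Finset.offDiag_card, sq]
  have hsize := size_conj_le (L := conflictClauses (α := α) E) (B := 5) (by
    simp only [conflictClauses, List.forall_mem_map]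
    exact fun _ _ => le_rfl)
  nlinarith

lemma size_coverClause_le (v : V) : (coverClause lab E v).size ≤ 2 * E.card + 4 := by
  have hlen : ((E.attach.filter (v ∈ ·.1)).toList.map
      (BExpr.var ∘ Sum.inr (α := α))).length ≤ E.card := by
    simpa using Finset.card_filter_le E.attach _
  have hdisj := size_disj_le (B := 1) (L := (E.attach.filter (v ∈ ·.1)).toList.map
      (BExpr.var ∘ Sum.inr (α := α))) (List.forall_mem_map.mpr fun _ _ => le_rfl)
  have hlab := (lab v).size_toBExpr_le (K := E)
  simp only [coverClause, size]
  omega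

lemma size_hgpFormula_le [Fintype V] :
    (hgpFormula lab E).size ≤ 10 * (E.card + Fintype.card V + 2) ^ 2 := by
  have hcover := size_conj_le (L := Finset.univ.toList.map (coverClause lab E))
    (fun c hc => by
      obtain ⟨v, -, rfl⟩ := List.mem_map.mp hc
      exact size_coverClause_le v)
  simp only [List.length_map, Finset.length_toList, Finset.card_univ] at hcover
  have hconflict := size_conj_conflictClauses_le (α := α) (E := E)
  simp only [hgpFormula, size]
  nlinarith

lemma negOnly_hgpFormula [Fintype V] (hmono : ∀ (v : V) (p : α), lab v ≠ HGPLabel.neg p) :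
    (hgpFormula lab E).NegOnly (· ∈ Set.range Sum.inr) := by
  refine ⟨negOnly_conj ?_, negOnly_conj ?_⟩
  · simp only [conflictClauses, List.forall_mem_map]
    exact fun p _ => ⟨⟨_, rfl, p.1, rfl⟩, ⟨_, rfl, p.2, rfl⟩⟩
  · simp only [List.forall_mem_map]
    intro v _
    refine ⟨?_, negOnly_disj (List.forall_mem_map.mpr fun _ _ => trivial)⟩
    cases hv : lab v with
    | neg p => exact absurd hv (hmono v p)
    | _ => trivial

end HypergraphProgram

lemma exists_independent_cover_iff {V : Type} (E : Finset (Finset V)) (Z : V → Prop) :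
    (∃ X ⊆ E, (X : Set (Finset V)).Pairwise Disjoint ∧ ∀ v, Z v → ∃ e ∈ X, v ∈ e) ↔
      ∃ β : E → Bool, {e | β e = true}.Pairwise (fun e e' => Disjoint e.1 e'.1) ∧
        ∀ v, Z v → ∃ e, β e = true ∧ v ∈ e.1 := by
  classical
  constructor
  · rintro ⟨X, hXE, hX, hcover⟩
    refine ⟨fun e => decide (e.1 ∈ X), fun e he e' he' hne => ?_, fun v hv => ?_⟩
    · simp only [Set.mem_ofPred_eq, decide_eq_true_eq] at he he'
      exact hX he he' (Subtype.coe_injective.ne hne)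
    · obtain ⟨e, he, hve⟩ := hcover v hv
      exact ⟨⟨e, hXE he⟩, by simpa using he, hve⟩
  · rintro ⟨β, hβ, hcover⟩
    refine ⟨(E.attach.filter (β · = true)).map (Function.Embedding.subtype _), ?_, ?_, ?_⟩
    · intro x hx
      obtain ⟨e, -, rfl⟩ := Finset.mem_map.mp hx
      exact e.2
    · intro x hx x' hx' hne
      obtain ⟨e, he, rfl⟩ := Finset.mem_map.mp hx
      obtain ⟨e', he', rfl⟩ := Finset.mem_map.mp hx'
      exact hβ (Finset.mem_filter.mp he).2 (Finset.mem_filter.mp he').2 (ne_of_apply_ne _ hne)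
    · intro v hv
      obtain ⟨e, he, hve⟩ := hcover v hv
      exact ⟨e, Finset.mem_map_of_mem _ (Finset.mem_filter.mpr ⟨Finset.mem_attach _ _, he⟩), hve⟩

/-- From any hypergraph program `H` (vertices `V` labelled by `lab`, hyperedges
`E`) of size `m = |E|` computing `f`, one obtains a nondeterministic Boolean
circuit `C(x, y)` of size polynomial in `m` (and the number of vertices)
computing `f`: its advice variables `y` correspond to the hyperedges, and
`C(α, β) = 1` iff `{e : β e = 1}` is an independent set of hyperedges covering
all vertices whose labels evaluate to 0 under `α`; consequently `f α` holds iff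
`∃ β, C(α, β) = 1`. If `H` is monotone, negations in `C` are applied only to
advice variables. -/
theorem stmt_19 {V α : Type} [Fintype V] [DecidableEq V]
    (lab : V → HGPLabel α) (E : Finset (Finset V))
    (f : (α → Bool) → Prop)
    (hcomp : ∀ σ : α → Bool,
      f σ ↔ ∃ X ⊆ E, (X : Set (Finset V)).Pairwise Disjoint ∧
        ∀ v : V, (lab v).eval σ = false → ∃ e ∈ X, v ∈ e) :
    ∃ C : BCircuit (α ⊕ {e // e ∈ E}),
      C.m ≤ 10 * (E.card + Fintype.card V + 2) ^ 2 ∧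
      (∀ (σ : α → Bool) (β : {e // e ∈ E} → Bool),
        C.eval (Sum.elim σ β) = true ↔
          (({e : {e // e ∈ E} | β e = true} : Set {e // e ∈ E}).Pairwise
              (fun e e' => Disjoint e.1 e'.1) ∧
            ∀ v : V, (lab v).eval σ = false →
              ∃ e : {e // e ∈ E}, β e = true ∧ v ∈ e.1)) ∧
      (∀ σ : α → Bool, f σ ↔ ∃ β : {e // e ∈ E} → Bool,
        C.eval (Sum.elim σ β) = true) ∧
      ((∀ (v : V) (p : α), lab v ≠ HGPLabel.neg p) →
        ∀ k : ℕ, k < C.m → ∀ i : ℕ, C.gate k = BGate.not i →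
          i < C.m ∧ ∃ e : {e // e ∈ E}, C.gate i = BGate.var (Sum.inr e)) := by
  refine ⟨(hgpFormula lab E).toCircuit, ?_, fun σ β => ?_, fun σ => ?_, fun hmono k hk i hg => ?_⟩
  · simpa using size_hgpFormula_le
  · rw [BExpr.eval_toCircuit, eval_hgpFormula]
  · simp only [hcomp, exists_independent_cover_iff, BExpr.eval_toCircuit, eval_hgpFormula]
  · obtain ⟨hi, _, ⟨e, rfl⟩, hgi⟩ := BExpr.toCircuit_not_gate (negOnly_hgpFormula hmono) hk hg
    exact ⟨hi, e, hgi⟩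
end
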